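/- Let M be a multiset over α, N a multiset over β, and f : α → K, g : β → K key functions. Then the cardinality of the equijoin satisfies card (J(M,N)) ≤ mf f M * card N and card (J(M,N)) ≤ card M * mf g N. (Each row of one relation matches at most the maximum join-key frequency of the other relation, the counting principle underlying the stability bounds for joins.) -/
import Mathlib

/-- Maximum frequency of a join key: the max over values of the multiplicity in `M.map f`. -/
def mf {α K : Type*} [DecidableEq K] (f : α → K) (M : Multiset α) : ℕ :=
  (M.map f).toFinset.sup fun v => (M.map f).count v

/-- Equijoin of two multisets on key functions `f` and `g`. -/
def equijoin {α β K : Type*} [DecidableEq K] (f : α → K) (g : β → K)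
    (M : Multiset α) (N : Multiset β) : Multiset (α × β) :=
  M.bind fun a => (N.filter fun b => f a = g b).map (Prod.mk a)

lemma count_le_mf {α K : Type*} [DecidableEq K] (f : α → K) (M : Multiset α) (v : K) :
    (M.map f).count v ≤ mf f M := by
  rcases Nat.eq_zero_or_pos ((M.map f).count v) with h | h
  · simp [h]
  · exact Finset.le_sup (f := fun v => (M.map f).count v) (Multiset.mem_toFinset.2 (Multiset.count_pos.1 h))

lemma card_equijoin {α β K : Type*} [DecidableEq K] (f : α → K) (g : β → K)
    (M : Multiset α) (N : Multiset β) :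
    Multiset.card (equijoin f g M N) = (M.map fun a => (N.map g).count (f a)).sum := by
  simp [equijoin, Multiset.card_bind, Multiset.count_map, Function.comp_def]

lemma sum_ite_card {β K : Type*} [DecidableEq K] (g : β → K) (N : Multiset β) (v : K) :
    (N.map fun b => if g b = v then 1 else 0).sum
      = Multiset.card (N.filter fun b => v = g b) := by
  induction N using Multiset.induction with
  | empty => simp
  | cons b N ihn =>
    simp only [Multiset.map_cons, Multiset.sum_cons, Multiset.filter_cons]
    rw [ihn]
    split_ifs with h1 h2 h2
    · simp [add_comm]
    · exact absurd h1.symm h2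
    · exact absurd h2.symm h1
    · simp

lemma sum_count_symm {α β K : Type*} [DecidableEq K] (f : α → K) (g : β → K)
    (M : Multiset α) (N : Multiset β) :
    (M.map fun a => (N.map g).count (f a)).sum = (N.map fun b => (M.map f).count (g b)).sum := by
  induction M using Multiset.induction with
  | empty => simp
  | cons a M ih =>
    simp only [Multiset.map_cons, Multiset.sum_cons, Multiset.count_cons, ih]
    rw [Multiset.sum_map_add]
    have := sum_ite_card g N (f a)
    rw [Multiset.count_map]
    omega

theorem stmt4 {α β K : Type*} [DecidableEq K]
    (M : Multiset α) (N : Multiset β) (f : α → K) (g : β → K) :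
    Multiset.card (equijoin f g M N) ≤ mf f M * Multiset.card N ∧
    Multiset.card (equijoin f g M N) ≤ Multiset.card M * mf g N := by
  constructor
  · rw [card_equijoin, sum_count_symm]
    calc (N.map fun b => (M.map f).count (g b)).sum
        ≤ Multiset.card (N.map fun b => (M.map f).count (g b)) • mf f M := by
          apply Multiset.sum_le_card_nsmul
          intro x hx
          obtain ⟨b, -, rfl⟩ := Multiset.mem_map.1 hx
          exact count_le_mf f M (g b)
      _ = mf f M * Multiset.card N := by simp [mul_comm]
  · rw [card_equijoin]
    calc (M.map fun a => (N.map g).count (f a)).sum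
        ≤ Multiset.card (M.map fun a => (N.map g).count (f a)) • mf g N := by
          apply Multiset.sum_le_card_nsmul
          intro x hx
          obtain ⟨a, -, rfl⟩ := Multiset.mem_map.1 hx
          exact count_le_mf g N (f a)
      _ = Multiset.card M * mf g N := by simp [mul_comm]
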